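/- arXiv:1701.04395 — 2 statements merged into one kernel-verified Lean document; each statement's English description precedes it below -/
import Mathlib

section
/- Let m > 0, h ∈ ℝ³, Σ ∈ 𝕊³ with the pseudo-inertia J = [[Σ, h],[hᵀ, m]] positive definite. Then there exists a finitely supported positive measure on ℝ³ (a finite set of point masses with positive weights) whose total mass is m, first moment is h, and second moment matrix is Σ. -/
/-!
By the Schur complement, `J ≻ 0` forces `m > 0` and `C = Σ - h hᵀ / m ⪰ 0`. Factor `C = Bᵀ B` and
let `b₁, …, b_d` be the rows of `B`. Putting mass `m / (2d)` at each of the `2d` points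
`h / m ± √(d / m) • b_k`, the `±` pairs cancel in the first moment and in the cross terms of the
second, which leaves mass `m`, first moment `h` and second moment `h hᵀ / m + Bᵀ B = Σ`.
-/

open Matrix

def pseudoInertia {ι : Type*} (Sig : Matrix ι ι ℝ) (h : ι → ℝ) (m : ℝ) :
    Matrix (ι ⊕ Fin 1) (ι ⊕ Fin 1) ℝ :=
  fromBlocks Sig (replicateCol (Fin 1) h) (replicateRow (Fin 1) h) (of fun _ _ => m)

namespace Matrix.PosDef

variable {ι : Type*} {Sig : Matrix ι ι ℝ} {h : ι → ℝ} {m : ℝ}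

theorem pseudoInertia_mass_pos (hJ : (pseudoInertia Sig h m).PosDef) : 0 < m :=
  hJ.diag_pos (i := Sum.inr 0)

theorem posSemidef_sub_vecMulVec_of_pseudoInertia [Finite ι]
    (hJ : (pseudoInertia Sig h m).PosDef) : (Sig - m⁻¹ • vecMulVec h h).PosSemidef := by
  have hm := hJ.pseudoInertia_mass_pos
  have hD : (of fun _ _ => m : Matrix (Fin 1) (Fin 1) ℝ) = m • 1 := by
    ext i j; fin_cases i; fin_cases j; simp
  have hDpos : (m • 1 : Matrix (Fin 1) (Fin 1) ℝ).PosDef := PosDef.one.smul hm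
  have := hDpos.isUnit.invertible
  have hschur := (PosDef.fromBlocks₂₂ Sig (replicateCol (Fin 1) h) hDpos).mp
  rw [conjTranspose_replicateCol, star_trivial, ← hD] at hschur
  have hDinv : (of fun _ _ => m : Matrix (Fin 1) (Fin 1) ℝ)⁻¹ = m⁻¹ • 1 := by
    rw [hD]; exact inv_eq_right_inv (by simp [smul_smul, hm.ne'])
  have hS := hschur hJ.posSemidef
  rw [hDinv, Matrix.mul_smul, Matrix.mul_one, Matrix.smul_mul] at hS
  rw [vecMulVec_eq (Fin 1)]
  exact hS

end Matrix.PosDef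

def RealizesMoments {κ ι : Type*} [Fintype κ] (w : κ → ℝ) (p : κ → ι → ℝ) (m : ℝ) (h : ι → ℝ)
    (Sig : Matrix ι ι ℝ) : Prop :=
  (∀ k, 0 < w k) ∧ ∑ k, w k = m ∧ (∀ i, ∑ k, w k * p k i = h i) ∧
    ∀ i j, ∑ k, w k * p k i * p k j = Sig i j

namespace RealizesMoments

variable {κ κ' ι : Type*} [Fintype κ] [Fintype κ'] {w : κ → ℝ} {p : κ → ι → ℝ} {m : ℝ}
  {h : ι → ℝ} {Sig : Matrix ι ι ℝ}

theorem comp_equiv (H : RealizesMoments w p m h Sig) (e : κ' ≃ κ) :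
    RealizesMoments (w ∘ e) (p ∘ e) m h Sig := by
  obtain ⟨hw, hmass, hfirst, hsecond⟩ := H
  refine ⟨fun k => hw (e k), ?_, fun i => ?_, fun i j => ?_⟩
  · rw [← hmass]; exact e.sum_comp w
  · rw [← hfirst]; exact e.sum_comp (fun k => w k * p k i)
  · rw [← hsecond]; exact e.sum_comp (fun k => w k * p k i * p k j)

theorem exists_fin (H : RealizesMoments w p m h Sig) :
    ∃ (n : ℕ) (w' : Fin n → ℝ) (p' : Fin n → ι → ℝ), RealizesMoments w' p' m h Sig :=
  ⟨_, _, _, H.comp_equiv (Fintype.equivFin κ).symm⟩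

end RealizesMoments

theorem realizesMoments_sumElim_add_sub {ι κ : Type*} [Fintype κ] [Nonempty κ] {m : ℝ} (hm : 0 < m)
    (a : ι → ℝ) (b : κ → ι → ℝ) :
    RealizesMoments (fun _ => m / (2 * Fintype.card κ))
      (Sum.elim (fun k => a + b k) (fun k => a - b k)) m (m • a)
      (of fun i j => m * a i * a j + m / Fintype.card κ * ∑ k, b k i * b k j) := by
  set d : ℝ := (Fintype.card κ : ℝ)
  have hd : 0 < d := Nat.cast_pos.mpr Fintype.card_pos
  have hsum_const (c : ℝ) : ∑ _ : κ, c = d * c := by simp [d]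
  refine ⟨fun _ => by positivity, ?_, fun i => ?_, fun i j => ?_⟩
  · rw [Fintype.sum_sum_type, hsum_const]
    field_simp; ring
  · calc ∑ k, m / (2 * d) * Sum.elim (fun k => a + b k) (fun k => a - b k) k i
        = ∑ k : κ, m / d * a i := by
          rw [Fintype.sum_sum_type, ← Finset.sum_add_distrib]
          refine Finset.sum_congr rfl fun k _ => ?_
          simp only [Sum.elim_inl, Sum.elim_inr, Pi.add_apply, Pi.sub_apply]
          field_simp; ring
      _ = (m • a) i := by rw [hsum_const]; field_simp; rfl
  · calc ∑ k, m / (2 * d) * Sum.elim (fun k => a + b k) (fun k => a - b k) k i *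
          Sum.elim (fun k => a + b k) (fun k => a - b k) k j
        = ∑ k : κ, (m / d * a i * a j + m / d * (b k i * b k j)) := by
          rw [Fintype.sum_sum_type, ← Finset.sum_add_distrib]
          refine Finset.sum_congr rfl fun k _ => ?_
          simp only [Sum.elim_inl, Sum.elim_inr, Pi.add_apply, Pi.sub_apply]
          field_simp; ring
      _ = m * a i * a j + m / d * ∑ k, b k i * b k j := by
          rw [Finset.sum_add_distrib, hsum_const, ← Finset.mul_sum]; field_simp

theorem exists_realizesMoments_of_posSemidef {ι : Type*} [Fintype ι] [Nonempty ι] {m : ℝ}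
    (hm : 0 < m) {h : ι → ℝ} {Sig : Matrix ι ι ℝ} (hC : (Sig - m⁻¹ • vecMulVec h h).PosSemidef) :
    ∃ (w : ι ⊕ ι → ℝ) (p : ι ⊕ ι → ι → ℝ), RealizesMoments w p m h Sig := by
  classical
  obtain ⟨B, hB⟩ : ∃ B : Matrix ι ι ℝ, Sig - m⁻¹ • vecMulVec h h = star B * B := by
    open scoped MatrixOrder in exact CStarAlgebra.nonneg_iff_eq_star_mul_self.mp hC.nonneg
  set d : ℝ := (Fintype.card ι : ℝ)
  have hd : 0 < d := Nat.cast_pos.mpr Fintype.card_pos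
  have key := realizesMoments_sumElim_add_sub hm (m⁻¹ • h) (fun k => √(d / m) • B k)
  have hfirst : m • m⁻¹ • h = h := smul_inv_smul₀ hm.ne' h
  have hsecond : of (fun i j => m * (m⁻¹ • h) i * (m⁻¹ • h) j +
      m / d * ∑ k, (√(d / m) • B k) i * (√(d / m) • B k) j) = Sig := by
    ext i j
    have hij := congrFun₂ hB i j
    simp only [Matrix.sub_apply, Matrix.smul_apply, vecMulVec_apply, mul_apply, star_apply,
      star_trivial, smul_eq_mul] at hij
    have hsq : √(d / m) * √(d / m) = d / m := Real.mul_self_sqrt (by positivity)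
    simp only [of_apply, Pi.smul_apply, smul_eq_mul]
    have hsum : ∑ k, √(d / m) * B k i * (√(d / m) * B k j) = d / m * ∑ k, B k i * B k j := by
      rw [Finset.mul_sum]
      refine Finset.sum_congr rfl fun k _ => ?_
      linear_combination B k i * B k j * hsq
    rw [hsum, ← hij]
    field_simp
    ring
  rw [hfirst, hsecond] at key
  exact ⟨_, _, key⟩

theorem posDef_pseudoInertia_realizable_by_point_masses_general (m : ℝ) (h : Fin 3 → ℝ)
    (Sig : Matrix (Fin 3) (Fin 3) ℝ)
    (hJ : (Matrix.fromBlocks Sig (Matrix.replicateCol (Fin 1) h) (Matrix.replicateRow (Fin 1) h)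
        (Matrix.of fun _ _ => m)).PosDef) :
    ∃ (n : ℕ) (w : Fin n → ℝ) (p : Fin n → Fin 3 → ℝ),
      (∀ k, 0 < w k) ∧ (∑ k, w k = m) ∧
      (∀ i, ∑ k, w k * p k i = h i) ∧
      (∀ i j, ∑ k, w k * p k i * p k j = Sig i j) := by
  obtain ⟨w, p, hwp⟩ := exists_realizesMoments_of_posSemidef hJ.pseudoInertia_mass_pos
    hJ.posSemidef_sub_vecMulVec_of_pseudoInertia
  exact hwp.exists_fin

/-- A positive-definite pseudo-inertia matrix is realizable by finitely many point
    masses with positive weights. -/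
theorem posDef_pseudoInertia_realizable_by_point_masses (m : ℝ) (h : Fin 3 → ℝ)
    (Sig : Matrix (Fin 3) (Fin 3) ℝ) (hS : Sig.IsSymm) (hm : 0 < m)
    (hJ : (Matrix.fromBlocks Sig (Matrix.replicateCol (Fin 1) h) (Matrix.replicateRow (Fin 1) h)
        (Matrix.of fun _ _ => m)).PosDef) :
    ∃ (n : ℕ) (w : Fin n → ℝ) (p : Fin n → Fin 3 → ℝ),
      (∀ k, 0 < w k) ∧ (∑ k, w k = m) ∧
      (∀ i, ∑ k, w k * p k i = h i) ∧
      (∀ i j, ∑ k, w k * p k i * p k j = Sig i j) :=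
  posDef_pseudoInertia_realizable_by_point_masses_general m h Sig hJ
end

section
/- Let S = {x ∈ ℝ³ : (x−x_s)ᵀ Q_s⁻¹ (x−x_s) ≤ 1} be an ellipsoid with Q_s positive definite, and let m > 0, h ∈ ℝ³ with c = h/m. Then c ∈ S if and only if the 4×4 matrix C = [[m, hᵀ − m·x_sᵀ],[h − m·x_s, m·Q_s]] is positive semidefinite. -/
/-! A block matrix `[[a, vᵀ], [v, D]]` with `D ≻ 0` is positive semidefinite exactly when its
Schur complement `a - vᵀ D⁻¹ v` is nonnegative. For `C`, with `D = m Q_s` and `v = m (c - x_s)`,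
the Schur complement is `m (1 - (c - x_s)ᵀ Q_s⁻¹ (c - x_s))`, which has the sign of the ellipsoid
inequality since `m > 0`. -/

open Matrix

namespace Matrix

theorem posSemidef_fromBlocks_scalar_iff {ι n : Type*} [Unique ι] [Fintype n] [DecidableEq n]
    (a : ℝ) (v : n → ℝ) {D : Matrix n n ℝ} (hD : D.PosDef) :
    (fromBlocks (of fun _ _ => a : Matrix ι ι ℝ) (replicateRow ι v) (replicateCol ι v)
      D).PosSemidef ↔ v ⬝ᵥ (D⁻¹ *ᵥ v) ≤ a := by
  have := hD.isUnit.invertible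
  have hcol : replicateCol ι v = (replicateRow ι v)ᴴ := by
    rw [conjTranspose_replicateRow, star_trivial]
  have hschur : (of fun _ _ => a : Matrix ι ι ℝ) - replicateRow ι v * D⁻¹ * (replicateRow ι v)ᴴ
      = diagonal fun _ => a - v ⬝ᵥ (D⁻¹ *ᵥ v) := by
    ext i j
    rw [Subsingleton.elim j i, ← hcol, Matrix.mul_assoc, ← replicateCol_mulVec,
      replicateRow_mul_replicateCol]
    simp
  rw [hcol, PosDef.fromBlocks₂₂ _ _ hD, hschur, posSemidef_diagonal_iff, forall_const, sub_nonneg]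

theorem smul_dotProduct_inv_smul_mulVec_smul {K n : Type*} [Field K] [Fintype n] [DecidableEq n]
    {k : K} (hk : k ≠ 0) {Q : Matrix n n K} (hQ : IsUnit Q) (v : n → K) :
    (k • v) ⬝ᵥ ((k • Q)⁻¹ *ᵥ (k • v)) = k * (v ⬝ᵥ (Q⁻¹ *ᵥ v)) := by
  have hinv : (k • Q)⁻¹ = k⁻¹ • Q⁻¹ :=
    inv_smul' Q (Units.mk0 k hk) ((isUnit_iff_isUnit_det Q).mp hQ)
  simp only [hinv, smul_mulVec, mulVec_smul, smul_dotProduct, dotProduct_smul, smul_eq_mul]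
  field_simp

end Matrix

/-- CoM-in-ellipsoid constraint as an LMI: c ∈ S iff
    C = [[m, hᵀ − m·x_sᵀ],[h − m·x_s, m·Q_s]] ⪰ 0. -/
theorem com_in_ellipsoid_iff_lmi (Qs : Matrix (Fin 3) (Fin 3) ℝ) (hQs : Qs.PosDef)
    (xs : Fin 3 → ℝ) (m : ℝ) (hm : 0 < m) (h c : Fin 3 → ℝ) (hc : c = m⁻¹ • h) :
    (c - xs) ⬝ᵥ (Qs⁻¹ *ᵥ (c - xs)) ≤ 1 ↔
      (Matrix.fromBlocks (Matrix.of fun _ _ => m) (Matrix.replicateRow (Fin 1) (h - m • xs))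
        (Matrix.replicateCol (Fin 1) (h - m • xs)) (m • Qs)).PosSemidef := by
  have hoffdiag : h - m • xs = m • (c - xs) := by
    rw [hc, smul_sub, smul_inv_smul₀ hm.ne']
  rw [hoffdiag, posSemidef_fromBlocks_scalar_iff _ _ (hQs.smul hm),
    smul_dotProduct_inv_smul_mulVec_smul hm.ne' hQs.isUnit, mul_le_iff_le_one_right hm]
end
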